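/- arXiv:2011.11457 — 2 statements merged into one kernel-verified Lean document; each statement's English description precedes it below -/
import Mathlib

section
/- Pizzetti's formula: for a polynomial f on ℝ^m, the integral of f over the unit sphere S^{m-1} equals ∑_{k=0}^{∞} (2π^{m/2} / (4^k k! Γ(k + m/2))) (Δ^k f)(0), where Δ is the Laplacian and the sum is finite since f is a polynomial. -/
open MeasureTheory

/-- The Laplace operator `Δ = ∑ⱼ ∂²/∂xⱼ²` on polynomials in `m` variables. -/
noncomputable def lap (m : ℕ) (p : MvPolynomial (Fin m) ℝ) : MvPolynomial (Fin m) ℝ :=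
  ∑ j, MvPolynomial.pderiv j (MvPolynomial.pderiv j p)

/-!
Both sides are linear in `f`, so it suffices to treat a monomial `x^α` of degree `|α|`.
Computing `∫_{ℝ^m} x^α e^{-‖x‖²} dx` once as a product of one-dimensional Gaussian moments and once
in polar coordinates gives
`∫_{S^{m-1}} x^α dS = 2 π^{m/2} ∏ⱼ μ(αⱼ) / (√2^{|α|} Γ((m + |α|)/2))`,
where `μ(n) = gaussMoment n` is the `n`-th moment of the standard normal distribution.
On the other side `(Δ^k x^α)(0)` vanishes unless `|α| = 2k`, when it equals `2^k k! ∏ⱼ μ(αⱼ)`;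
this follows by induction on `k` from `n (n - 1) μ(n - 2) = n μ(n)`.
-/

open MvPolynomial Finsupp Real Set Metric
open scoped Nat

noncomputable def gaussMoment (n : ℕ) : ℝ := if Even n then ((n - 1)‼ : ℕ) else 0

lemma natCast_mul_gaussMoment_sub_two (n : ℕ) :
    (n * (n - 1 : ℕ) : ℝ) * gaussMoment (n - 2) = n * gaussMoment n := by
  match n with
  | 0 => simp
  | 1 => simp [gaussMoment]
  | n + 2 =>
    have h2 : Even (n + 2) ↔ Even n := by simp [Nat.even_add]
    by_cases hn : Even n
    · simp only [gaussMoment, Nat.add_sub_cancel, hn, h2, if_true,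
        show n + 2 - 1 = n + 1 by omega, Nat.doubleFactorial_add_one]
      push_cast
      ring
    · simp [gaussMoment, hn, h2]

lemma degree_tsub_single_add {ι : Type*} (α : ι →₀ ℕ) {j : ι} {n : ℕ} (h : n ≤ α j) :
    (α - single j n).degree + n = α.degree := by
  conv_rhs => rw [← tsub_add_cancel_of_le (single_le_iff.2 h), map_add, degree_single]

lemma prod_gaussMoment_tsub_single {ι : Type*} [Fintype ι] [DecidableEq ι] (α : ι →₀ ℕ) (j : ι) :
    (α j * (α j - 1 : ℕ) : ℝ) * ∏ i, gaussMoment ((α - single j 2 : ι →₀ ℕ) i) =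
      α j * ∏ i, gaussMoment (α i) := by
  have hcompl : ∏ i ∈ {j}ᶜ, gaussMoment ((α - single j 2 : ι →₀ ℕ) i) =
      ∏ i ∈ {j}ᶜ, gaussMoment (α i) :=
    Finset.prod_congr rfl fun i hi => by
      rw [tsub_apply, single_eq_of_ne (by simpa using hi), tsub_zero]
  rw [Fintype.prod_eq_mul_prod_compl j,
    Fintype.prod_eq_mul_prod_compl j (fun i => gaussMoment (α i)), hcompl, tsub_apply,
    single_eq_same, ← mul_assoc, natCast_mul_gaussMoment_sub_two, mul_assoc]

lemma prod_gaussMoment_eq_zero_of_odd {ι : Type*} [Fintype ι] {α : ι →₀ ℕ} (h : Odd α.degree) :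
    ∏ j, gaussMoment (α j) = 0 := by
  by_contra hne
  have hev : ∀ j ∈ Finset.univ, Even (α j) := fun j _ => by
    by_contra hj
    exact hne (Finset.prod_eq_zero (Finset.mem_univ j) (if_neg hj))
  exact Nat.not_even_iff_odd.2 h (degree_eq_sum α ▸ Finset.even_sum _ hev)

section Laplacian

variable {m : ℕ}

noncomputable def lapLinear (m : ℕ) : Module.End ℝ (MvPolynomial (Fin m) ℝ) :=
  ∑ j, (pderiv j).toLinearMap * (pderiv j).toLinearMap

lemma lap_iterate_eq_pow (k : ℕ) : (lap m)^[k] = ⇑(lapLinear m ^ k) := by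
  rw [Module.End.coe_pow]
  congr
  ext p
  simp [lap, lapLinear]

lemma lap_monomial (α : Fin m →₀ ℕ) (c : ℝ) :
    lap m (monomial α c) = ∑ j, monomial (α - single j 2) (c * (α j * (α j - 1 : ℕ))) := by
  refine Finset.sum_congr rfl fun j _ => ?_
  rw [pderiv_monomial, pderiv_monomial, tsub_tsub, ← single_add, tsub_apply, single_eq_same,
    mul_assoc]

theorem eval_zero_lap_iterate_monomial (k : ℕ) (α : Fin m →₀ ℕ) (c : ℝ) :
    eval 0 ((lap m)^[k] (monomial α c)) =
      if α.degree = 2 * k then c * (2 ^ k * k ! * ∏ j, gaussMoment (α j)) else 0 := by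
  induction k generalizing α c with
  | zero =>
    rw [Function.iterate_zero_apply, eval_zero, constantCoeff_monomial]
    by_cases hα : α = 0
    · simp [hα, gaussMoment]
    · simp [hα, degree_eq_zero_iff]
  | succ k ih =>
    have hterm : ∀ j,
        eval 0 ((lap m)^[k] (monomial (α - single j 2) (c * (α j * (α j - 1 : ℕ))))) =
          if α.degree = 2 * (k + 1) then c * (2 ^ k * k ! * (α j * ∏ i, gaussMoment (α i)))
          else 0 := by
      intro j
      rw [ih, ← prod_gaussMoment_tsub_single]
      by_cases hj : 2 ≤ α j
      · rw [← degree_tsub_single_add α hj]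
        simp only [mul_add, mul_one, Nat.add_right_cancel_iff]
        split_ifs <;> ring
      · have : (α j * (α j - 1 : ℕ) : ℝ) = 0 := by
          interval_cases h : α j <;> simp
        simp [this]
    rw [Function.iterate_succ_apply, lap_monomial, lap_iterate_eq_pow, map_sum, map_sum,
      ← lap_iterate_eq_pow]
    simp only [hterm]
    split_ifs with hdeg
    · rw [← Finset.mul_sum, ← Finset.mul_sum, ← Finset.sum_mul, ← Nat.cast_sum, ← degree_eq_sum,
        hdeg, pow_succ, Nat.factorial_succ]
      push_cast
      ring
    · simp

end Laplacian

lemma integral_Ioi_pow_mul_exp_neg_sq (n : ℕ) :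
    ∫ r in Ioi (0 : ℝ), r ^ n * exp (-r ^ 2) = Gamma ((n + 1) / 2) / 2 := by
  have h := integral_rpow_mul_exp_neg_rpow two_pos
    (by linarith [(n.cast_nonneg : (0 : ℝ) ≤ n)] : (-1 : ℝ) < n)
  norm_cast at h
  rw [h, Nat.cast_add_one]
  ring

lemma integral_pow_mul_exp_neg_sq (n : ℕ) :
    ∫ t : ℝ, t ^ n * exp (-t ^ 2) = √π * gaussMoment n / √2 ^ n := by
  by_cases hn : Even n
  · obtain ⟨b, rfl⟩ := hn
    have habs : ∀ t : ℝ, t ^ (b + b) * exp (-t ^ 2) = |t| ^ (b + b) * exp (-|t| ^ 2) := by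
      intro t
      rw [sq_abs, ← two_mul, pow_mul, pow_mul, sq_abs]
    rw [integral_congr_ae (.of_forall habs),
      integral_comp_abs (f := fun t => t ^ (b + b) * exp (-t ^ 2)),
      integral_Ioi_pow_mul_exp_neg_sq, gaussMoment, if_pos ⟨b, rfl⟩, ← two_mul, pow_mul,
      sq_sqrt zero_le_two, show ((2 * b : ℕ) + 1 : ℝ) / 2 = b + 1 / 2 by push_cast; ring,
      Gamma_nat_add_half]
    field_simp
  · have hodd : ∀ t : ℝ, (-t) ^ n * exp (-(-t) ^ 2) = -(t ^ n * exp (-t ^ 2)) := by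
      intro t
      rw [(Nat.not_even_iff_odd.1 hn).neg_pow, neg_sq, neg_mul]
    have h := integral_neg_eq_self (fun t : ℝ => t ^ n * exp (-t ^ 2)) volume
    simp only [hodd, integral_neg] at h
    rw [gaussMoment, if_neg hn, mul_zero, zero_div]
    linarith

lemma integral_prod_pow_mul_exp_neg_norm_sq {ι : Type*} [Fintype ι] (α : ι → ℕ) :
    ∫ x : EuclideanSpace ℝ ι, (∏ j, x j ^ α j) * exp (-‖x‖ ^ 2) =
      ∏ j, ∫ t : ℝ, t ^ α j * exp (-t ^ 2) := by
  have hsplit : ∀ x : EuclideanSpace ℝ ι,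
      (∏ j, x j ^ α j) * exp (-‖x‖ ^ 2) = ∏ j, (x j ^ α j * exp (-x j ^ 2)) := by
    intro x
    rw [Finset.prod_mul_distrib, EuclideanSpace.real_norm_sq_eq, ← Finset.sum_neg_distrib, exp_sum]
  simp_rw [hsplit]
  rw [← integral_fintype_prod_eq_prod (fun j (t : ℝ) => t ^ α j * exp (-t ^ 2))]
  exact (EuclideanSpace.volume_preserving_symm_measurableEquiv_toLp ι).integral_comp
    (MeasurableEquiv.toLp 2 (ι → ℝ)).symm.measurableEmbedding
    fun y : ι → ℝ => ∏ j, (y j ^ α j * exp (-y j ^ 2))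

theorem integral_mul_fun_norm_of_homogeneous {E : Type*} [NormedAddCommGroup E] [NormedSpace ℝ E]
    [Nontrivial E] [FiniteDimensional ℝ E] [MeasurableSpace E] [BorelSpace E]
    (μ : Measure E) [μ.IsAddHaarMeasure] {g : E → ℝ} {d : ℕ}
    (hg : ∀ r : ℝ, 0 < r → ∀ x, g (r • x) = r ^ d * g x) (ρ : ℝ → ℝ) :
    ∫ x, g x * ρ ‖x‖ ∂μ =
      (∫ ω, g ω ∂μ.toSphere) * ∫ r in Ioi (0 : ℝ), r ^ (Module.finrank ℝ E - 1 + d) * ρ r := by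
  calc ∫ x, g x * ρ ‖x‖ ∂μ
      = ∫ x : ({0}ᶜ : Set E), g x * ρ ‖(x : E)‖ ∂μ.comap (↑) := by
        rw [integral_subtype_comap (measurableSet_singleton _).compl fun x => g x * ρ ‖x‖,
          restrict_compl_singleton]
    _ = ∫ p : sphere (0 : E) 1 × Ioi (0 : ℝ), g (p.2.1 • p.1.1) * ρ p.2
          ∂μ.toSphere.prod (.volumeIoiPow (Module.finrank ℝ E - 1)) := by
        rw [← μ.measurePreserving_homeomorphUnitSphereProd.integral_comp
          (Homeomorph.measurableEmbedding _)]
        refine integral_congr_ae (.of_forall fun x => ?_)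
        simp [smul_inv_smul₀ (norm_ne_zero_iff.2 x.2)]
    _ = ∫ p : sphere (0 : E) 1 × Ioi (0 : ℝ), g p.1 * (p.2.1 ^ d * ρ p.2)
          ∂μ.toSphere.prod (.volumeIoiPow (Module.finrank ℝ E - 1)) := by
        refine integral_congr_ae (.of_forall fun p => ?_)
        dsimp only
        rw [hg _ p.2.2]
        ring
    _ = (∫ ω, g ω ∂μ.toSphere) *
          ∫ r : Ioi (0 : ℝ), r.1 ^ d * ρ r ∂.volumeIoiPow (Module.finrank ℝ E - 1) :=
        integral_prod_mul (fun ω : sphere (0 : E) 1 => g ω) fun r : Ioi (0 : ℝ) => r.1 ^ d * ρ r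
    _ = _ := by
        simp only [Measure.volumeIoiPow, ENNReal.ofReal]
        rw [integral_withDensity_eq_integral_smul
            ((measurable_subtype_coe.pow_const _).real_toNNReal),
          integral_subtype_comap measurableSet_Ioi
            fun a => Real.toNNReal (a ^ (Module.finrank ℝ E - 1)) • (a ^ d * ρ a)]
        refine congrArg _ (setIntegral_congr_fun measurableSet_Ioi fun x hx => ?_)
        rw [NNReal.smul_def, Real.coe_toNNReal _ (pow_nonneg hx.out.le _), smul_eq_mul, pow_add,
          mul_assoc]

theorem integral_sphere_prod_pow {ι : Type*} [Fintype ι] [Nonempty ι] (α : ι →₀ ℕ) :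
    ∫ ω : sphere (0 : EuclideanSpace ℝ ι) 1, ∏ j, (ω : EuclideanSpace ℝ ι) j ^ α j
        ∂(volume : Measure (EuclideanSpace ℝ ι)).toSphere =
      2 * √π ^ Fintype.card ι * (∏ j, gaussMoment (α j)) /
        (√2 ^ α.degree * Gamma ((Fintype.card ι + α.degree) / 2)) := by
  have hhom : ∀ r : ℝ, 0 < r → ∀ x : EuclideanSpace ℝ ι,
      ∏ j, (r • x) j ^ α j = r ^ α.degree * ∏ j, x j ^ α j := fun r _ x => by
    simp only [PiLp.smul_apply, smul_eq_mul, mul_pow, Finset.prod_mul_distrib,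
      Finset.prod_pow_eq_pow_sum, degree_eq_sum]
  have hpolar := integral_mul_fun_norm_of_homogeneous volume
    (g := fun x : EuclideanSpace ℝ ι => ∏ j, x j ^ α j) hhom fun r => exp (-r ^ 2)
  rw [integral_prod_pow_mul_exp_neg_norm_sq, integral_Ioi_pow_mul_exp_neg_sq,
    finrank_euclideanSpace] at hpolar
  simp only [integral_pow_mul_exp_neg_sq, Finset.prod_div_distrib, Finset.prod_mul_distrib,
    Finset.prod_const, Finset.card_univ, Finset.prod_pow_eq_pow_sum, ← degree_eq_sum] at hpolar
  have hΓ : 0 < Gamma ((Fintype.card ι + α.degree) / 2) := Gamma_pos_of_pos (by positivity)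
  have hdim : ((Fintype.card ι - 1 + α.degree : ℕ) : ℝ) + 1 = Fintype.card ι + α.degree := by
    rw [Nat.cast_add, Nat.cast_sub Fintype.card_pos]
    push_cast
    ring
  rw [hdim] at hpolar
  rw [eq_div_iff (by positivity)]
  field_simp at hpolar
  linarith

section Pizzetti

variable {m : ℕ}

lemma integrable_eval_sphere (p : MvPolynomial (Fin m) ℝ) :
    Integrable (fun ω : sphere (0 : EuclideanSpace ℝ (Fin m)) 1 =>
      eval (fun j => (ω : EuclideanSpace ℝ (Fin m)) j) p)
      (volume : Measure (EuclideanSpace ℝ (Fin m))).toSphere :=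
  (continuous_eval p |>.comp <| by fun_prop).integrable_of_hasCompactSupport
    (.of_compactSpace _)

theorem hasSum_pizzetti_monomial [NeZero m] (α : Fin m →₀ ℕ) (c : ℝ) :
    HasSum (fun k : ℕ => (2 * π ^ ((m : ℝ) / 2) /
          (4 ^ k * (k ! : ℝ) * Gamma (k + (m : ℝ) / 2))) *
        eval (0 : Fin m → ℝ) ((lap m)^[k] (monomial α c)))
      (∫ ω : sphere (0 : EuclideanSpace ℝ (Fin m)) 1,
        eval (fun j => (ω : EuclideanSpace ℝ (Fin m)) j) (monomial α c)
        ∂(volume : Measure (EuclideanSpace ℝ (Fin m))).toSphere) := by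
  simp only [eval_zero_lap_iterate_monomial, eval_monomial,
    Finsupp.prod_fintype _ _ fun _ => pow_zero _]
  rw [integral_const_mul, integral_sphere_prod_pow, Fintype.card_fin,
    sqrt_eq_rpow, ← rpow_natCast, ← rpow_mul pi_pos.le]
  rcases Nat.even_or_odd α.degree with ⟨K, hK⟩ | hodd
  · convert hasSum_single K fun k hk => ?_ using 1
    · have hm : (0 : ℝ) < m := Nat.cast_pos.2 (NeZero.pos m)
      have hΓ : 0 < Gamma (K + m / 2) := Gamma_pos_of_pos (by positivity)
      rw [if_pos (by omega), hK, ← two_mul, pow_mul, sq_sqrt zero_le_two, one_div_mul_eq_div,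
        show ((m : ℝ) + (2 * K : ℕ)) / 2 = K + m / 2 by push_cast; ring,
        show (4 : ℝ) ^ K = 2 ^ K * 2 ^ K by rw [← mul_pow]; norm_num]
      field_simp
    · rw [if_neg (by omega), mul_zero]
  · rw [prod_gaussMoment_eq_zero_of_odd hodd]
    convert hasSum_zero using 1
    · funext k
      rw [if_neg (by rintro h; exact Nat.not_even_iff_odd.2 hodd ⟨k, by omega⟩), mul_zero]
    · simp

end Pizzetti

/-- Pizzetti's formula: for a polynomial `f` on `ℝ^m`,
`∫_{S^{m-1}} f dS = ∑_{k=0}^∞ (2π^{m/2}/(4^k k! Γ(k+m/2))) (Δ^k f)(0)`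
(the series is finite since `Δ^k f = 0` for large `k`). -/
theorem pizzetti (m : ℕ) (hm : 1 ≤ m) (f : MvPolynomial (Fin m) ℝ) :
    ∫ ω : Metric.sphere (0 : EuclideanSpace ℝ (Fin m)) 1,
        MvPolynomial.eval (fun j => (ω : EuclideanSpace ℝ (Fin m)) j) f
        ∂((volume : Measure (EuclideanSpace ℝ (Fin m))).toSphere) =
      ∑' k : ℕ, (2 * Real.pi ^ ((m : ℝ) / 2) /
          (4 ^ k * (Nat.factorial k : ℝ) * Real.Gamma (k + (m : ℝ) / 2))) *
        MvPolynomial.eval (0 : Fin m → ℝ) ((lap m)^[k] f) := by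
  have : NeZero m := ⟨by omega⟩
  refine (HasSum.tsum_eq ?_).symm
  induction f using MvPolynomial.induction_on' with
  | monomial α c => exact hasSum_pizzetti_monomial α c
  | add p q hp hq =>
    simp only [lap_iterate_eq_pow, map_add, mul_add] at hp hq ⊢
    rw [integral_add (integrable_eval_sphere p) (integrable_eval_sphere q)]
    exact hp.add hq
end

section
/- Recurrence for Dirac derivatives of the ψ functions: let τ = t + is with t, s orthonormal unit vectors in ℝ^m, define ψ_{τ,2s',k}(z) = τ ⟨z,τ⟩^{s'+k} ⟨z,τ†⟩^{s'} and ψ_{τ,2s'+1,k}(z) = τ†τ ⟨z,τ⟩^{s'+k+1} ⟨z,τ†⟩^{s'}. Then ∂_z ψ_{τ,2s'+1,k}(z) = 4(s'+k+1) ψ_{τ,2s',k}(z) and ∂_z ψ_{τ,2s'+2,k}(z) = (s'+1) ψ_{τ,2s'+1,k}(z). In particular ψ_{τ,0,k}(z) = τ⟨z,τ⟩^k is monogenic for every k. -/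
open scoped TensorProduct

/-- The complex Clifford algebra `ℂ_m`: Clifford algebra of `v ↦ -∑ vⱼ²` on `ℂ^m`. -/
noncomputable def Qf (m : ℕ) : QuadraticForm ℂ (Fin m → ℂ) :=
  QuadraticMap.weightedSumSquares ℂ (fun _ : Fin m => (-1 : ℂ))

/-- Clifford-algebra-valued polynomials in `m` variables, realized as the tensor product
of the polynomial ring with the Clifford algebra. -/
abbrev PolyCl (m : ℕ) : Type := MvPolynomial (Fin m) ℂ ⊗[ℂ] CliffordAlgebra (Qf m)

/-- Partial derivative `∂/∂zⱼ` on Clifford-valued polynomials. -/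
noncomputable def pd (m : ℕ) (j : Fin m) : PolyCl m →ₗ[ℂ] PolyCl m :=
  LinearMap.rTensor (CliffordAlgebra (Qf m)) (MvPolynomial.pderiv j).toLinearMap

/-- The (complexified) Dirac operator `∂_z = ∑ⱼ eⱼ ∂_{zⱼ}` on Clifford-valued polynomials. -/
noncomputable def dirac (m : ℕ) (F : PolyCl m) : PolyCl m :=
  ∑ j, ((1 : MvPolynomial (Fin m) ℂ) ⊗ₜ[ℂ] CliffordAlgebra.ι (Qf m) (Pi.single j 1)) *
    pd m j F

/-- The vector variable `z = ∑ⱼ zⱼ eⱼ` as a Clifford-valued polynomial. -/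
noncomputable def zvec (m : ℕ) : PolyCl m :=
  ∑ j, (MvPolynomial.X j) ⊗ₜ[ℂ] CliffordAlgebra.ι (Qf m) (Pi.single j 1)

/-- A Clifford-valued polynomial is homogeneous of degree `k` if it is a sum of tensors
`p ⊗ c` with `p` homogeneous of degree `k`. -/
def homog (m : ℕ) (k : ℕ) (F : PolyCl m) : Prop :=
  F ∈ Submodule.span ℂ
    {x : PolyCl m | ∃ p c, MvPolynomial.IsHomogeneous p k ∧ x = p ⊗ₜ[ℂ] c}

/-- The Laplacian `Δ = -∂_z²` on Clifford-valued polynomials. -/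
noncomputable def lapCl (m : ℕ) (F : PolyCl m) : PolyCl m :=
  ∑ j, pd m j (pd m j F)

/-!
The vectors `τ` and `τ†` are isotropic for the Clifford form (`τ² = τ†² = 0`) and have polar
form `4` (`ττ† + τ†τ = 4`), whence `ττ†τ = 4τ`. Since `∂_{zⱼ}⟨z,u⟩ = uⱼ` and the partial
derivatives act only on the polynomial factor, the Leibniz rule gives
`∂_z(⟨z,τ⟩^a ⟨z,τ†⟩^b ⊗ c) = a ⟨z,τ⟩^(a-1) ⟨z,τ†⟩^b ⊗ τc + b ⟨z,τ⟩^a ⟨z,τ†⟩^(b-1) ⊗ τ†c`;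
taking `c = τ` or `c = τ†τ`, the relations above kill one term and rescale the other.
-/

open MvPolynomial CliffordAlgebra TensorProduct

lemma Qf_apply (m : ℕ) (u : Fin m → ℂ) : Qf m u = -∑ j, u j ^ 2 := by
  simp [Qf, QuadraticMap.weightedSumSquares_apply, sq]

lemma polar_Qf (m : ℕ) (u v : Fin m → ℂ) :
    QuadraticMap.polar (Qf m) u v = -2 * ∑ j, u j * v j := by
  simp only [QuadraticMap.polar, Qf_apply, Finset.mul_sum, ← Finset.sum_neg_distrib,
    ← Finset.sum_sub_distrib]
  exact Finset.sum_congr rfl fun j _ => by simp only [Pi.add_apply]; ring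

lemma Qf_ofReal_add_I_mul_eq_zero {m : ℕ} {t s : Fin m → ℝ}
    (hnorm : ∑ j, t j ^ 2 = ∑ j, s j ^ 2) (horth : ∑ j, t j * s j = 0) :
    Qf m (fun j => (t j : ℂ) + Complex.I * s j) = 0 := by
  have hsq (j : Fin m) : ((t j : ℂ) + Complex.I * s j) ^ 2 =
      (t j : ℂ) ^ 2 - (s j : ℂ) ^ 2 + 2 * Complex.I * (t j * s j) := by
    linear_combination (s j : ℂ) ^ 2 * Complex.I_sq
  simp only [Qf_apply, hsq, Finset.sum_add_distrib, Finset.sum_sub_distrib, ← Finset.mul_sum]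
  exact_mod_cast (by simp [hnorm, horth] : _)

lemma polar_Qf_ofReal_add_I_mul_neg_add_I_mul (m : ℕ) (t s : Fin m → ℝ) :
    QuadraticMap.polar (Qf m) (fun j => (t j : ℂ) + Complex.I * s j)
      (fun j => -(t j : ℂ) + Complex.I * s j) = 2 * ((∑ j, t j ^ 2 + ∑ j, s j ^ 2 : ℝ) : ℂ) := by
  have hprod (j : Fin m) : ((t j : ℂ) + Complex.I * s j) * (-(t j : ℂ) + Complex.I * s j) =
      -((t j : ℂ) ^ 2 + (s j : ℂ) ^ 2) := by
    linear_combination (s j : ℂ) ^ 2 * Complex.I_sq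
  simp only [polar_Qf, hprod, Finset.sum_neg_distrib, Finset.sum_add_distrib]
  push_cast
  ring

lemma ι_mul_ι_mul_ι_of_isotropic {R M : Type*} [CommRing R] [AddCommGroup M] [Module R M]
    {Q : QuadraticForm R M} {u : M} (hu : Q u = 0) (v : M) :
    ι Q u * ι Q v * ι Q u = QuadraticMap.polar Q u v • ι Q u := by
  rw [ι_mul_ι_mul_ι, hu, zero_smul, sub_zero, map_smul]

lemma ι_mul_self_of_isotropic {R M : Type*} [CommRing R] [AddCommGroup M] [Module R M]
    {Q : QuadraticForm R M} {u : M} (hu : Q u = 0) : ι Q u * ι Q u = 0 := by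
  rw [ι_sq_scalar, hu, map_zero]

lemma pderiv_sum_C_mul_X (m : ℕ) (u : Fin m → ℂ) (j : Fin m) :
    pderiv j (∑ i, C (u i) * X i) = C (u j) := by
  simp [pderiv_X, Pi.single_apply]

lemma dirac_tmul (m : ℕ) (p : MvPolynomial (Fin m) ℂ) (c : CliffordAlgebra (Qf m)) :
    dirac m (p ⊗ₜ[ℂ] c) = ∑ j, pderiv j p ⊗ₜ[ℂ] (ι (Qf m) (Pi.single j 1) * c) := by
  simp [dirac, pd, Algebra.TensorProduct.tmul_mul_tmul]

lemma sum_C_mul_tmul_ι_single_mul (m : ℕ) (u : Fin m → ℂ) (q : MvPolynomial (Fin m) ℂ)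
    (c : CliffordAlgebra (Qf m)) :
    ∑ j, (C (u j) * q) ⊗ₜ[ℂ] (ι (Qf m) (Pi.single j 1) * c) = q ⊗ₜ[ℂ] (ι (Qf m) u * c) := by
  conv_rhs => rw [pi_eq_sum_univ' u, map_sum, Finset.sum_mul, tmul_sum]
  refine Finset.sum_congr rfl fun j _ => ?_
  rw [← smul_eq_C_mul, smul_tmul, map_smul, smul_mul_assoc]

lemma dirac_pow_mul_pow_tmul {m : ℕ} {P Q : MvPolynomial (Fin m) ℂ} {u v : Fin m → ℂ}
    (hP : ∀ j, pderiv j P = C (u j)) (hQ : ∀ j, pderiv j Q = C (v j)) (a b : ℕ)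
    (c : CliffordAlgebra (Qf m)) :
    dirac m ((P ^ a * Q ^ b) ⊗ₜ[ℂ] c) =
      (a : ℂ) • ((P ^ (a - 1) * Q ^ b) ⊗ₜ[ℂ] (ι (Qf m) u * c)) +
      (b : ℂ) • ((P ^ a * Q ^ (b - 1)) ⊗ₜ[ℂ] (ι (Qf m) v * c)) := by
  have hderiv (j : Fin m) : pderiv j (P ^ a * Q ^ b) =
      C (u j) * ((a : ℂ) • (P ^ (a - 1) * Q ^ b)) +
      C (v j) * ((b : ℂ) • (P ^ a * Q ^ (b - 1))) := by
    rw [Derivation.leibniz, Derivation.leibniz_pow, Derivation.leibniz_pow, hP, hQ]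
    simp only [smul_eq_C_mul, smul_eq_mul, nsmul_eq_mul, C_eq_coe_nat]
    ring
  simp only [dirac_tmul, hderiv, add_tmul, Finset.sum_add_distrib,
    sum_C_mul_tmul_ι_single_mul, smul_tmul']

/-- Recurrence for Dirac derivatives of the `ψ` functions: for `τ = t + is` with `t, s`
orthonormal unit vectors of `ℝ^m` and `τ† = -t + is`, setting
`ψ_{τ,2s',k}(z) = τ ⟨z,τ⟩^{s'+k} ⟨z,τ†⟩^{s'}` and
`ψ_{τ,2s'+1,k}(z) = τ†τ ⟨z,τ⟩^{s'+k+1} ⟨z,τ†⟩^{s'}`, one has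
`∂_z ψ_{τ,2s'+1,k} = 4(s'+k+1) ψ_{τ,2s',k}`, `∂_z ψ_{τ,2s'+2,k} = (s'+1) ψ_{τ,2s'+1,k}`;
in particular `ψ_{τ,0,k} = τ⟨z,τ⟩^k` is monogenic for every `k`. -/
theorem psi_recurrence (m : ℕ) (t s : Fin m → ℝ)
    (ht : ∑ j, t j ^ 2 = 1) (hs : ∑ j, s j ^ 2 = 1) (hts : ∑ j, t j * s j = 0) :
    let τ : Fin m → ℂ := fun j => (t j : ℂ) + Complex.I * s j
    let τd : Fin m → ℂ := fun j => -(t j : ℂ) + Complex.I * s j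
    let pτ : MvPolynomial (Fin m) ℂ := ∑ j, MvPolynomial.C (τ j) * MvPolynomial.X j
    let pτd : MvPolynomial (Fin m) ℂ := ∑ j, MvPolynomial.C (τd j) * MvPolynomial.X j
    let ψeven : ℕ → ℕ → PolyCl m := fun s' k =>
      (pτ ^ (s' + k) * pτd ^ s') ⊗ₜ[ℂ] CliffordAlgebra.ι (Qf m) τ
    let ψodd : ℕ → ℕ → PolyCl m := fun s' k =>
      (pτ ^ (s' + k + 1) * pτd ^ s') ⊗ₜ[ℂ]
        (CliffordAlgebra.ι (Qf m) τd * CliffordAlgebra.ι (Qf m) τ)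
    (∀ k : ℕ, dirac m (ψeven 0 k) = 0) ∧
    (∀ s' k : ℕ, dirac m (ψodd s' k) = ((4 * (s' + k + 1) : ℕ) : ℂ) • ψeven s' k) ∧
    (∀ s' k : ℕ, dirac m (ψeven (s' + 1) k) = ((s' + 1 : ℕ) : ℂ) • ψodd s' k) := by
  intro τ τd pτ pτd ψeven ψodd
  have hQτ : Qf m τ = 0 := Qf_ofReal_add_I_mul_eq_zero (by rw [ht, hs]) hts
  have hQτd : Qf m τd = 0 := by
    simpa using Qf_ofReal_add_I_mul_eq_zero (t := -t) (s := s) (by simp [ht, hs]) (by simp [hts])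
  have hpolar : QuadraticMap.polar (Qf m) τ τd = 4 := by
    rw [polar_Qf_ofReal_add_I_mul_neg_add_I_mul, ht, hs]
    norm_num
  have hττ := ι_mul_self_of_isotropic hQτ
  have hτdτd := ι_mul_self_of_isotropic hQτd
  have hττdτ : ι (Qf m) τ * (ι (Qf m) τd * ι (Qf m) τ) = (4 : ℂ) • ι (Qf m) τ := by
    rw [← mul_assoc, ι_mul_ι_mul_ι_of_isotropic hQτ, hpolar]
  have hpτ : ∀ j, pderiv j pτ = C (τ j) := pderiv_sum_C_mul_X m τ
  have hpτd : ∀ j, pderiv j pτd = C (τd j) := pderiv_sum_C_mul_X m τd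
  refine ⟨fun k => ?_, fun s' k => ?_, fun s' k => ?_⟩
  · dsimp only [ψeven]
    rw [dirac_pow_mul_pow_tmul hpτ hpτd, hττ]
    simp
  · dsimp only [ψodd, ψeven]
    rw [dirac_pow_mul_pow_tmul hpτ hpτd, ← mul_assoc (ι (Qf m) τd), hτdτd, hττdτ]
    simp only [Nat.add_sub_cancel, zero_mul, tmul_zero, smul_zero, add_zero, tmul_smul, smul_smul]
    congr 1
    push_cast
    ring
  · dsimp only [ψodd, ψeven]
    rw [dirac_pow_mul_pow_tmul hpτ hpτd, hττ]
    simp only [Nat.add_sub_cancel, tmul_zero, smul_zero, zero_add]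
    rw [Nat.add_right_comm]
end
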